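/- Let G be a Lie group acting freely and properly on Q, with the lifted action on TQ by tangent prolongation, and suppose the regular Lagrangian L is G-invariant. For ξ in the Lie algebra 𝔤: (i) the momentum function Jξ = α_L(ξ_Q^c) is a constant of the motion of ξ_{L,β} if and only if β(ξ_Q^c) = 0; (ii) if β(ξ_Q^c) = 0, then ℒ_{ξ_Q^c} β = 0 if and only if ι_{ξ_Q^c} dβ = 0. Moreover, the subspace 𝔤_β = {ξ ∈ 𝔤 : β(ξ_Q^c) = 0 and ι_{ξ_Q^c} dβ = 0} is a Lie subalgebra of 𝔤. -/

import Mathlib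

/- Formalization in the smooth vector-space model: Q is modelled by a real
normed space `V`, so `TQ = V × V` with coordinates `(q, q̇)`.  Vector fields,
1-forms, exterior derivatives, Lie derivatives and brackets are expressed via
the Fréchet derivative `fderiv`. -/

noncomputable section

variable {V : Type*} [NormedAddCommGroup V] [NormedSpace ℝ V]

/-- Exterior derivative of a 1-form on a normed space:
`dα(x)(a,b) = (Dα(x)a)(b) − (Dα(x)b)(a)`. -/
def extDerivOne {E : Type*} [NormedAddCommGroup E] [NormedSpace ℝ E]
    (α : E → E →L[ℝ] ℝ) (x : E) (a b : E) : ℝ :=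
  fderiv ℝ α x a b - fderiv ℝ α x b a

/-- Lie derivative of a 1-form along a vector field:
`(ℒ_X α)(x) = Dα(x)(X x) + α(x) ∘ DX(x)`. -/
def lieDerivOne {E : Type*} [NormedAddCommGroup E] [NormedSpace ℝ E]
    (X : E → E) (α : E → E →L[ℝ] ℝ) (x : E) : E →L[ℝ] ℝ :=
  fderiv ℝ α x (X x) + (α x).comp (fderiv ℝ X x)

/-- Lie bracket of vector fields: `[X,Y](x) = DY(x)(X x) − DX(x)(Y x)`. -/
def vbracket {E : Type*} [NormedAddCommGroup E] [NormedSpace ℝ E]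
    (X Y : E → E) (x : E) : E :=
  fderiv ℝ Y x (X x) - fderiv ℝ X x (Y x)

/-- The vertical endomorphism `S` of `TQ = V × V`: `S(u, w) = (0, u)`. -/
def vertEndo (V : Type*) [NormedAddCommGroup V] [NormedSpace ℝ V] :
    (V × V) →L[ℝ] V × V :=
  (ContinuousLinearMap.inr ℝ V V).comp (ContinuousLinearMap.fst ℝ V V)

/-- Poincaré–Cartan 1-form `α_L = S*(dL)`. -/
def alphaL (L : V × V → ℝ) (x : V × V) : (V × V) →L[ℝ] ℝ :=
  (fderiv ℝ L x).comp (vertEndo V)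

/-- Poincaré–Cartan 2-form `ω_L = −dα_L`. -/
def omegaL (L : V × V → ℝ) (x : V × V) (a b : V × V) : ℝ :=
  -extDerivOne (alphaL L) x a b

/-- Energy `E_L = Δ(L) − L`, where `Δ(q, q̇) = (0, q̇)` is the Liouville
vector field. -/
def energyL (L : V × V → ℝ) (x : V × V) : ℝ :=
  fderiv ℝ L x (0, x.2) - L x

/-- Vertical lift `X^v` of a vector field on `Q`. -/
def vlift (X : V → V) : V × V → V × V := fun x => (0, X x.1)

/-- Complete lift `X^c` of a vector field on `Q`. -/
def clift (X : V → V) : V × V → V × V := fun x => (X x.1, fderiv ℝ X x.1 x.2)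

/-- A 1-form on `TQ` is semibasic if it annihilates all vertical vectors. -/
def SemibasicTQ (β : V × V → (V × V) →L[ℝ] ℝ) : Prop :=
  ∀ (x : V × V) (w : V), β x (0, w) = 0

/-- `ξ` is the forced Euler–Lagrange vector field of `(L, β)`:
`ι_ξ ω_L = dE_L + β`. -/
def IsForcedEL (L : V × V → ℝ) (β : V × V → (V × V) →L[ℝ] ℝ)
    (ξ : V × V → V × V) : Prop :=
  ∀ (x : V × V) (b : V × V),
    omegaL L x (ξ x) b = fderiv ℝ (energyL L) x b + β x b

/-- Regularity of the Lagrangian, expressed by nondegeneracy of `ω_L`. -/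
def RegularLag (L : V × V → ℝ) : Prop :=
  ∀ (x : V × V) (a : V × V), (∀ b, omegaL L x a b = 0) → a = 0

variable {𝔤 : Type*} [LieRing 𝔤] [LieAlgebra ℝ 𝔤]

/-- Membership in `𝔤_β = {ξ ∈ 𝔤 : β(ξ_Q^c) = 0 and ι_{ξ_Q^c} dβ = 0}`. -/
def memGBeta (gen : 𝔤 →ₗ[ℝ] (V → V)) (β : V × V → (V × V) →L[ℝ] ℝ)
    (ξ : 𝔤) : Prop :=
  (∀ x, β x (clift (gen ξ) x) = 0) ∧
  (∀ x v, extDerivOne β x (clift (gen ξ) x) v = 0)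

section Helpers
open ContinuousLinearMap

variable {E F : Type*} [NormedAddCommGroup E] [NormedSpace ℝ E]
  [NormedAddCommGroup F] [NormedSpace ℝ F]

lemma fderiv_eval' {g : E → E →L[ℝ] F} {u : E → E} {x : E}
    (hg : DifferentiableAt ℝ g x) (hu : DifferentiableAt ℝ u x) (a : E) :
    fderiv ℝ (fun y => g y (u y)) x a = fderiv ℝ g x a (u x) + g x (fderiv ℝ u x a) := by
  rw [fderiv_clm_apply hg hu]; simp [add_comm]

lemma fderiv_eval_const {g : E → E →L[ℝ] F} {x : E}
    (hg : DifferentiableAt ℝ g x) (v a : E) :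
    fderiv ℝ (fun y => g y v) x a = fderiv ℝ g x a v := by
  have h := fderiv_clm_apply hg (differentiableAt_const v)
  have h2 : fderiv ℝ (fun y => g y ((fun _ => v) y)) x = fderiv ℝ (fun y => g y v) x := rfl
  rw [← h2, h]; simp

lemma sym2 {f : E → F} (hf : ContDiff ℝ (⊤ : ℕ∞) f) (x a b : E) :
    fderiv ℝ (fderiv ℝ f) x a b = fderiv ℝ (fderiv ℝ f) x b a :=
  (hf.contDiffAt.isSymmSndFDerivAt (by rw [minSmoothness_of_isRCLikeNormedField]; exact WithTop.coe_le_coe.mpr le_top)) a b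

lemma extDerivOne_add (β : E → E →L[ℝ] ℝ) (x a a' v : E) :
    extDerivOne β x (a + a') v = extDerivOne β x a v + extDerivOne β x a' v := by
  simp [extDerivOne, map_add]; ring

lemma extDerivOne_smul (β : E → E →L[ℝ] ℝ) (c : ℝ) (x a v : E) :
    extDerivOne β x (c • a) v = c * extDerivOne β x a v := by
  simp [extDerivOne, map_smul]; ring

lemma extDerivOne_neg (β : E → E →L[ℝ] ℝ) (x a v : E) :
    extDerivOne β x (-a) v = -extDerivOne β x a v := by
  simp [extDerivOne, map_neg]; ring

end Helpers

section CliftHelpers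
open ContinuousLinearMap

lemma contDiff_clift {X : V → V} (hX : ContDiff ℝ (⊤ : ℕ∞) X) : ContDiff ℝ (⊤ : ℕ∞) (clift X) :=
  ContDiff.prodMk (hX.comp contDiff_fst)
    (((hX.fderiv_right (by simp)).comp contDiff_fst).clm_apply contDiff_snd)

lemma differentiable_clift {X : V → V} (hX : ContDiff ℝ (⊤ : ℕ∞) X) :
    Differentiable ℝ (clift X) := (contDiff_clift hX).differentiable (by simp)

lemma fderiv_clift_apply {X : V → V} (hX : ContDiff ℝ (⊤ : ℕ∞) X) (x w : V × V) :
    fderiv ℝ (clift X) x w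
      = (fderiv ℝ X x.1 w.1, fderiv ℝ (fderiv ℝ X) x.1 w.1 x.2 + fderiv ℝ X x.1 w.2) := by
  have h1 : HasFDerivAt (fun y : V × V => X y.1) ((fderiv ℝ X x.1).comp (fst ℝ V V)) x :=
    ((hX.differentiable (by simp) x.1).hasFDerivAt).comp x (hasFDerivAt_fst)
  have hc : HasFDerivAt (fun y : V × V => fderiv ℝ X y.1)
      ((fderiv ℝ (fderiv ℝ X) x.1).comp (fst ℝ V V)) x :=
    ((((hX.fderiv_right (m := (⊤ : ℕ∞)) (by simp)).differentiable (by simp)) x.1).hasFDerivAt).comp x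
      (hasFDerivAt_fst)
  have h2 := hc.clm_apply hasFDerivAt_snd
  have H := (h1.prodMk h2).fderiv
  have : clift X = fun y : V × V => (X y.1, fderiv ℝ X y.1 y.2) := rfl
  rw [this, H]
  simp [add_comm]

end CliftHelpers

section MoreHelpers
variable {E : Type*} [NormedAddCommGroup E] [NormedSpace ℝ E]

lemma lie_eq_ext {β : E → E →L[ℝ] ℝ} (hβ : ContDiff ℝ (⊤ : ℕ∞) β) {A : E → E}
    (hA : Differentiable ℝ A) (h0 : ∀ y, β y (A y) = 0) (x b : E) :
    lieDerivOne A β x b = extDerivOne β x (A x) b := by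
  have hβd := hβ.differentiable (by simp)
  have hz : (fun y => β y (A y)) = fun _ => (0 : ℝ) := funext h0
  have h1 : fderiv ℝ (fun y => β y (A y)) x b = 0 := by rw [hz]; simp
  rw [fderiv_eval' hβd.differentiableAt hA.differentiableAt b] at h1
  have h2 : lieDerivOne A β x b = fderiv ℝ β x (A x) b + β x (fderiv ℝ A x b) := by
    simp [lieDerivOne]
  rw [h2]
  simp only [extDerivOne]
  linarith

lemma beta_bracket {β : E → E →L[ℝ] ℝ} (hβ : ContDiff ℝ (⊤ : ℕ∞) β) {A B : E → E}
    (hA : Differentiable ℝ A) (hB : Differentiable ℝ B)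
    (h0A : ∀ y, β y (A y) = 0) (h0B : ∀ y, β y (B y) = 0)
    (hdA : ∀ y v, extDerivOne β y (A y) v = 0) (x : E) :
    β x (vbracket A B x) = 0 := by
  have hβd := hβ.differentiable (by simp)
  have dB : β x (fderiv ℝ B x (A x)) = -fderiv ℝ β x (A x) (B x) := by
    have hz : (fun y => β y (B y)) = fun _ => (0 : ℝ) := funext h0B
    have h1 : fderiv ℝ (fun y => β y (B y)) x (A x) = 0 := by rw [hz]; simp
    rw [fderiv_eval' hβd.differentiableAt hB.differentiableAt (A x)] at h1
    linarith
  have dA : β x (fderiv ℝ A x (B x)) = -fderiv ℝ β x (B x) (A x) := by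
    have hz : (fun y => β y (A y)) = fun _ => (0 : ℝ) := funext h0A
    have h1 : fderiv ℝ (fun y => β y (A y)) x (B x) = 0 := by rw [hz]; simp
    rw [fderiv_eval' hβd.differentiableAt hA.differentiableAt (B x)] at h1
    linarith
  have h2 := hdA x (B x)
  simp only [extDerivOne] at h2
  simp only [vbracket, map_sub]
  linarith

lemma ext_bracket {β : E → E →L[ℝ] ℝ} (hβ : ContDiff ℝ (⊤ : ℕ∞) β) {A B : E → E}
    (hA : Differentiable ℝ A) (hB : Differentiable ℝ B)
    (hdA : ∀ y v, extDerivOne β y (A y) v = 0)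
    (hdB : ∀ y v, extDerivOne β y (B y) v = 0) (x v : E) :
    extDerivOne β x (vbracket A B x) v = 0 := by
  have hβd := hβ.differentiable (by simp)
  have hβ' : ContDiff ℝ (⊤ : ℕ∞) (fderiv ℝ β) := hβ.fderiv_right (by simp)
  have hβ'd := hβ'.differentiable (by simp)
  have hsymβ : ∀ a b c, fderiv ℝ (fderiv ℝ β) x a b c = fderiv ℝ (fderiv ℝ β) x b a c :=
    fun a b c => congrFun (congrArg _ (sym2 hβ x a b)) c
  -- pointwise forms
  have HA : ∀ y w, fderiv ℝ β y (A y) w = fderiv ℝ β y w (A y) := by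
    intro y w; have := hdA y w; simp only [extDerivOne] at this; linarith
  have HB : ∀ y w, fderiv ℝ β y (B y) w = fderiv ℝ β y w (B y) := by
    intro y w; have := hdB y w; simp only [extDerivOne] at this; linarith
  -- derivative of y ↦ fderiv β y (C y) w  along a
  have D1 : ∀ (C : E → E), Differentiable ℝ C → ∀ (w a : E),
      fderiv ℝ (fun y => fderiv ℝ β y (C y) w) x a
        = fderiv ℝ (fderiv ℝ β) x a (C x) w + fderiv ℝ β x (fderiv ℝ C x a) w := by
    intro C hC w a
    have hg : DifferentiableAt ℝ (fun y => fderiv ℝ β y (C y)) x :=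
      hβ'd.differentiableAt.clm_apply hC.differentiableAt
    rw [fderiv_eval_const hg w a,
      fderiv_eval' hβ'd.differentiableAt hC.differentiableAt a]
    simp
  -- derivative of y ↦ fderiv β y w (C y) along a
  have D2 : ∀ (C : E → E), Differentiable ℝ C → ∀ (w a : E),
      fderiv ℝ (fun y => fderiv ℝ β y w (C y)) x a
        = fderiv ℝ (fderiv ℝ β) x a w (C x) + fderiv ℝ β x w (fderiv ℝ C x a) := by
    intro C hC w a
    have hg2 : Differentiable ℝ (fun y => fderiv ℝ β y w) :=
      fun y => hβ'd.differentiableAt.clm_apply (differentiableAt_const w)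
    rw [fderiv_eval' (g := fun y => fderiv ℝ β y w) (x := x)
      hg2.differentiableAt hC.differentiableAt a]
    congr 1
    rw [fderiv_eval_const hβ'd.differentiableAt w a]
  -- equation (1): differentiate HB-identity along A x
  have E1 : fderiv ℝ (fderiv ℝ β) x (A x) (B x) v + fderiv ℝ β x (fderiv ℝ B x (A x)) v
      = fderiv ℝ (fderiv ℝ β) x (A x) v (B x) + fderiv ℝ β x v (fderiv ℝ B x (A x)) := by
    have hz : (fun y => fderiv ℝ β y (B y) v) = fun y => fderiv ℝ β y v (B y) := by
      funext y; exact HB y v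
    have := DFunLike.congr_fun (congrArg (fun f => fderiv ℝ f x) hz) (A x)
    rw [D1 B hB v (A x), D2 B hB v (A x)] at this
    linarith [this]
  have E2 : fderiv ℝ (fderiv ℝ β) x (B x) (A x) v + fderiv ℝ β x (fderiv ℝ A x (B x)) v
      = fderiv ℝ (fderiv ℝ β) x (B x) v (A x) + fderiv ℝ β x v (fderiv ℝ A x (B x)) := by
    have hz : (fun y => fderiv ℝ β y (A y) v) = fun y => fderiv ℝ β y v (A y) := by
      funext y; exact HA y v
    have := DFunLike.congr_fun (congrArg (fun f => fderiv ℝ f x) hz) (B x)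
    rw [D1 A hA v (B x), D2 A hA v (B x)] at this
    linarith [this]
  -- equation (3'): differentiate y ↦ fderiv β y (A y) (B y) = fderiv β y (B y) (A y) along v
  have E3 : fderiv ℝ (fderiv ℝ β) x v (A x) (B x) = fderiv ℝ (fderiv ℝ β) x v (B x) (A x) := by
    have hgA : DifferentiableAt ℝ (fun y => fderiv ℝ β y (A y)) x :=
      hβ'd.differentiableAt.clm_apply hA.differentiableAt
    have hgB : DifferentiableAt ℝ (fun y => fderiv ℝ β y (B y)) x :=
      hβ'd.differentiableAt.clm_apply hB.differentiableAt
    have hz : (fun y => fderiv ℝ β y (A y) (B y)) = fun y => fderiv ℝ β y (B y) (A y) := by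
      funext y; exact HA y (B y)
    have h := DFunLike.congr_fun (congrArg (fun f => fderiv ℝ f x) hz) v
    have eA : fderiv ℝ (fun y => fderiv ℝ β y (A y) (B y)) x v
        = (fderiv ℝ (fderiv ℝ β) x v (A x) + fderiv ℝ β x (fderiv ℝ A x v)) (B x)
          + fderiv ℝ β x (A x) (fderiv ℝ B x v) := by
      rw [fderiv_eval' (g := fun y => fderiv ℝ β y (A y)) (x := x)
        hgA hB.differentiableAt v,
        fderiv_eval' hβ'd.differentiableAt hA.differentiableAt v]
    have eB : fderiv ℝ (fun y => fderiv ℝ β y (B y) (A y)) x v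
        = (fderiv ℝ (fderiv ℝ β) x v (B x) + fderiv ℝ β x (fderiv ℝ B x v)) (A x)
          + fderiv ℝ β x (B x) (fderiv ℝ A x v) := by
      rw [fderiv_eval' (g := fun y => fderiv ℝ β y (B y)) (x := x)
        hgB hA.differentiableAt v,
        fderiv_eval' hβ'd.differentiableAt hB.differentiableAt v]
    rw [eA, eB] at h
    simp only [ContinuousLinearMap.add_apply] at h
    have c1 := HA x (fderiv ℝ B x v)
    have c2 := HB x (fderiv ℝ A x v)
    linarith
  simp only [extDerivOne, vbracket, map_sub, ContinuousLinearMap.sub_apply]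
  have s1 := hsymβ (A x) (B x) v
  have s2 := hsymβ (A x) v (B x)
  have s3 := hsymβ (B x) v (A x)
  linarith

end MoreHelpers

lemma momentum_deriv (L : V × V → ℝ) (hL : ContDiff ℝ (⊤ : ℕ∞) L)
    (X : V → V) (hX : ContDiff ℝ (⊤ : ℕ∞) X)
    (hinvX : ∀ x, fderiv ℝ L x (clift X x) = 0)
    (β : V × V → (V × V) →L[ℝ] ℝ)
    (ξf : V × V → V × V) (hξf : IsForcedEL L β ξf) (x : V × V) :
    fderiv ℝ (fun y => alphaL L y (clift X y)) x (ξf x) = -β x (clift X x) := by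
  have hLd := hL.differentiable (by simp)
  have hL' : ContDiff ℝ (⊤ : ℕ∞) (fderiv ℝ L) := hL.fderiv_right (by simp)
  have hL'd := hL'.differentiable (by simp)
  have hsym : ∀ a b, fderiv ℝ (fderiv ℝ L) x a b = fderiv ℝ (fderiv ℝ L) x b a := sym2 hL x
  -- derivative of y ↦ (0, X y.1)
  have hm : ∀ y : V × V, HasFDerivAt (fun z : V × V => ((0 : V), X z.1))
      (((0 : (V × V) →L[ℝ] V)).prod ((fderiv ℝ X y.1).comp (ContinuousLinearMap.fst ℝ V V))) y :=
    fun y => (hasFDerivAt_const (0 : V) y).prodMk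
      (((hX.differentiable (by simp) y.1).hasFDerivAt).comp y hasFDerivAt_fst)
  have hmd : Differentiable ℝ (fun z : V × V => ((0 : V), X z.1)) :=
    fun y => (hm y).differentiableAt
  have hmderiv : ∀ w : V × V, fderiv ℝ (fun z : V × V => ((0 : V), X z.1)) x w
      = ((0 : V), fderiv ℝ X x.1 w.1) := by
    intro w; rw [(hm x).fderiv]; simp
  have hJ : (fun y => alphaL L y (clift X y)) = fun y => fderiv ℝ L y ((0 : V), X y.1) := rfl
  have e1 : fderiv ℝ (fun y => fderiv ℝ L y ((0 : V), X y.1)) x (ξf x)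
      = fderiv ℝ (fderiv ℝ L) x (ξf x) ((0 : V), X x.1)
        + fderiv ℝ L x ((0 : V), fderiv ℝ X x.1 (ξf x).1) := by
    have h := fderiv_eval' (g := fderiv ℝ L) (u := fun z : V × V => ((0 : V), X z.1)) (x := x)
      hL'd.differentiableAt hmd.differentiableAt (ξf x)
    rw [hmderiv (ξf x)] at h; exact h
  have hID : ∀ b : V × V,
      fderiv ℝ (fderiv ℝ L) x b (clift X x) + fderiv ℝ L x (fderiv ℝ (clift X) x b) = 0 := by
    intro b
    have hz : (fun y => fderiv ℝ L y (clift X y)) = fun _ => (0 : ℝ) := funext hinvX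
    have h0 : fderiv ℝ (fun y => fderiv ℝ L y (clift X y)) x b = 0 := by rw [hz]; simp
    rw [fderiv_eval' hL'd.differentiableAt ((differentiable_clift hX).differentiableAt) b] at h0
    exact h0
  have hIDv : ∀ u : V, fderiv ℝ (fderiv ℝ L) x ((0 : V), u) (clift X x)
      = - fderiv ℝ L x ((0 : V), fderiv ℝ X x.1 u) := by
    intro u
    have h := hID ((0 : V), u)
    rw [fderiv_clift_apply hX x ((0 : V), u)] at h
    simp only [map_zero, ContinuousLinearMap.zero_apply, zero_add] at h
    linarith
  have hαd : Differentiable ℝ (alphaL L) :=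
    fun y => (hL'd y).clm_comp (differentiableAt_const (vertEndo V))
  have hα : ∀ a b : V × V, fderiv ℝ (alphaL L) x a b
      = fderiv ℝ (fderiv ℝ L) x a ((0 : V), b.1) := by
    intro a b
    rw [← fderiv_eval_const hαd.differentiableAt b a]
    have h3 : (fun y => alphaL L y b) = fun y => fderiv ℝ L y ((0 : V), b.1) := rfl
    rw [h3, fderiv_eval_const hL'd.differentiableAt _ a]
  have hm2 : HasFDerivAt (fun z : V × V => ((0 : V), z.2))
      ((0 : (V × V) →L[ℝ] V).prod (ContinuousLinearMap.snd ℝ V V)) x :=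
    (hasFDerivAt_const (0 : V) x).prodMk hasFDerivAt_snd
  have hE : ∀ b : V × V, fderiv ℝ (energyL L) x b
      = fderiv ℝ (fderiv ℝ L) x b ((0 : V), x.2) + fderiv ℝ L x ((0 : V), b.2)
        - fderiv ℝ L x b := by
    intro b
    have hdd : DifferentiableAt ℝ (fun y : V × V => fderiv ℝ L y ((0 : V), y.2)) x :=
      hL'd.differentiableAt.clm_apply hm2.differentiableAt
    have h4 : energyL L = fun y : V × V => fderiv ℝ L y ((0 : V), y.2) - L y := rfl
    rw [h4, fderiv_fun_sub hdd hLd.differentiableAt]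
    simp only [ContinuousLinearMap.coe_sub', Pi.sub_apply]
    rw [fderiv_eval' hL'd.differentiableAt hm2.differentiableAt b, hm2.fderiv]
    simp
  have hEL := hξf x (clift X x)
  unfold omegaL extDerivOne at hEL
  rw [hα (ξf x) (clift X x), hα (clift X x) (ξf x), hE (clift X x)] at hEL
  have hc1 : (clift X x).1 = X x.1 := rfl
  have hc2 : (clift X x).2 = fderiv ℝ X x.1 x.2 := rfl
  rw [hc1, hc2, hinvX x] at hEL
  have k1 := hIDv (ξf x).1
  have k2 := hIDv x.2
  have s1 := hsym (clift X x) ((0 : V), (ξf x).1)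
  have s2 := hsym (clift X x) ((0 : V), x.2)
  rw [hJ, e1]
  linarith

section CliftAlg
variable {V : Type*} [NormedAddCommGroup V] [NormedSpace ℝ V]

lemma clift_add {X Y : V → V} (hX : Differentiable ℝ X) (hY : Differentiable ℝ Y) (x : V × V) :
    clift (X + Y) x = clift X x + clift Y x := by
  have h : fderiv ℝ (X + Y) x.1 = fderiv ℝ X x.1 + fderiv ℝ Y x.1 := by
    have : (X + Y) = fun q => X q + Y q := rfl
    rw [this, fderiv_fun_add hX.differentiableAt hY.differentiableAt]
  simp [clift, h, Prod.ext_iff, Pi.add_apply]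

lemma clift_smul (c : ℝ) {X : V → V} (hX : Differentiable ℝ X) (x : V × V) :
    clift (c • X) x = c • clift X x := by
  have h : fderiv ℝ (c • X) x.1 = c • fderiv ℝ X x.1 := by
    have : (c • X) = fun q => c • X q := rfl
    rw [this, fderiv_fun_const_smul hX.differentiableAt]
  simp [clift, h, Prod.ext_iff, Pi.smul_apply]

lemma clift_zero (x : V × V) : clift (0 : V → V) x = 0 := by
  have h : fderiv ℝ (0 : V → V) x.1 = 0 := by
    have : (0 : V → V) = fun _ => (0 : V) := rfl
    rw [this, fderiv_fun_const]
    rfl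
  simp [clift, h, Prod.ext_iff]

lemma clift_neg (W : V → V) (x : V × V) :
    clift (fun q => -W q) x = -clift W x := by
  have h : fderiv ℝ (fun q => -W q) x.1 = -fderiv ℝ W x.1 := fderiv_neg
  simp [clift, h, Prod.ext_iff]

lemma clift_vbracket {X Y : V → V} (hX : ContDiff ℝ (⊤ : ℕ∞) X) (hY : ContDiff ℝ (⊤ : ℕ∞) Y) (x : V × V) :
    clift (vbracket X Y) x = vbracket (clift X) (clift Y) x := by
  have hXd := hX.differentiable (by simp)
  have hYd := hY.differentiable (by simp)
  have hX'd := (hX.fderiv_right (m := (⊤ : ℕ∞)) (by simp)).differentiable (by simp)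
  have hY'd := (hY.fderiv_right (m := (⊤ : ℕ∞)) (by simp)).differentiable (by simp)
  have h1 : DifferentiableAt ℝ (fun q => fderiv ℝ Y q (X q)) x.1 :=
    hY'd.differentiableAt.clm_apply hXd.differentiableAt
  have h2 : DifferentiableAt ℝ (fun q => fderiv ℝ X q (Y q)) x.1 :=
    hX'd.differentiableAt.clm_apply hYd.differentiableAt
  have hW : fderiv ℝ (vbracket X Y) x.1 x.2
      = (fderiv ℝ (fderiv ℝ Y) x.1 x.2 (X x.1) + fderiv ℝ Y x.1 (fderiv ℝ X x.1 x.2))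
        - (fderiv ℝ (fderiv ℝ X) x.1 x.2 (Y x.1) + fderiv ℝ X x.1 (fderiv ℝ Y x.1 x.2)) := by
    have h3 : vbracket X Y = fun q => fderiv ℝ Y q (X q) - fderiv ℝ X q (Y q) := rfl
    rw [h3, fderiv_fun_sub h1 h2]
    simp only [ContinuousLinearMap.coe_sub', Pi.sub_apply]
    rw [fderiv_eval' hY'd.differentiableAt hXd.differentiableAt x.2,
      fderiv_eval' hX'd.differentiableAt hYd.differentiableAt x.2]
  have hrhs : vbracket (clift X) (clift Y) x
      = (fderiv ℝ Y x.1 (X x.1) - fderiv ℝ X x.1 (Y x.1),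
         (fderiv ℝ (fderiv ℝ Y) x.1 (X x.1) x.2 + fderiv ℝ Y x.1 (fderiv ℝ X x.1 x.2))
          - (fderiv ℝ (fderiv ℝ X) x.1 (Y x.1) x.2 + fderiv ℝ X x.1 (fderiv ℝ Y x.1 x.2))) := by
    have e1 := fderiv_clift_apply hY x (clift X x)
    have e2 := fderiv_clift_apply hX x (clift Y x)
    simp only [vbracket]
    rw [e1, e2]
    simp only [clift, Prod.mk_sub_mk]
  have hlhs : clift (vbracket X Y) x = (fderiv ℝ Y x.1 (X x.1) - fderiv ℝ X x.1 (Y x.1),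
      fderiv ℝ (vbracket X Y) x.1 x.2) := rfl
  rw [hlhs, hrhs, hW]
  have sX := sym2 hX x.1 x.2 (Y x.1)
  have sY := sym2 hY x.1 x.2 (X x.1)
  rw [Prod.ext_iff]
  constructor
  · rfl
  · simp only []
    rw [sX, sY]

end CliftAlg


/-- Lemma on momentum functions for an invariant Lagrangian with external
force: (i) `Jξ = α_L(ξ_Q^c)` is conserved iff `β(ξ_Q^c) = 0`; (ii) if so,
`ℒ_{ξ_Q^c} β = 0` iff `ι_{ξ_Q^c} dβ = 0`; and `𝔤_β` is a Lie subalgebra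
(a subspace closed under the Lie bracket). -/
theorem momentum_map_lemma
    (gen : 𝔤 →ₗ[ℝ] (V → V)) (hgen : ∀ ξ : 𝔤, ContDiff ℝ (⊤ : ℕ∞) (gen ξ))
    -- ξ ↦ ξ_Q is a Lie algebra antihomomorphism
    (hanti : ∀ ξ η : 𝔤, gen ⁅ξ, η⁆ = fun q => -vbracket (gen ξ) (gen η) q)
    (L : V × V → ℝ) (hL : ContDiff ℝ (⊤ : ℕ∞) L) (hreg : RegularLag L)
    -- L is invariant under the lifted action
    (hinv : ∀ (ξ : 𝔤) (x : V × V), fderiv ℝ L x (clift (gen ξ) x) = 0)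
    (β : V × V → (V × V) →L[ℝ] ℝ) (hβ : ContDiff ℝ (⊤ : ℕ∞) β) (hsb : SemibasicTQ β)
    (ξf : V × V → V × V) (hξf : IsForcedEL L β ξf) (hξfs : ContDiff ℝ (⊤ : ℕ∞) ξf) :
    -- (i)
    (∀ ξ : 𝔤,
      (∀ x, fderiv ℝ (fun y => alphaL L y (clift (gen ξ) y)) x (ξf x) = 0) ↔
        (∀ x, β x (clift (gen ξ) x) = 0)) ∧
    -- (ii)
    (∀ ξ : 𝔤, (∀ x, β x (clift (gen ξ) x) = 0) →
      ((∀ x, lieDerivOne (clift (gen ξ)) β x = 0) ↔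
        (∀ x v, extDerivOne β x (clift (gen ξ) x) v = 0))) ∧
    -- 𝔤_β is a vector subspace closed under the bracket, i.e. a Lie subalgebra
    (memGBeta gen β 0) ∧
    (∀ ξ η : 𝔤, memGBeta gen β ξ → memGBeta gen β η → memGBeta gen β (ξ + η)) ∧
    (∀ (c : ℝ) (ξ : 𝔤), memGBeta gen β ξ → memGBeta gen β (c • ξ)) ∧
    (∀ ξ η : 𝔤, memGBeta gen β ξ → memGBeta gen β η → memGBeta gen β ⁅ξ, η⁆) := by
  refine ⟨?_, ?_, ?_, ?_, ?_, ?_⟩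
  · intro ξ
    have key := momentum_deriv L hL (gen ξ) (hgen ξ) (hinv ξ) β ξf hξf
    constructor
    · intro h x
      have h1 := h x
      rw [key x] at h1
      linarith
    · intro h x
      rw [key x, h x, neg_zero]
  · intro ξ h0
    have hA : Differentiable ℝ (clift (gen ξ)) := differentiable_clift (hgen ξ)
    constructor
    · intro h x v
      rw [← lie_eq_ext hβ hA h0 x v, h x, ContinuousLinearMap.zero_apply]
    · intro h x
      apply ContinuousLinearMap.ext
      intro v
      rw [lie_eq_ext hβ hA h0 x v, ContinuousLinearMap.zero_apply]
      exact h x v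
  · constructor
    · intro x
      rw [map_zero gen, clift_zero x, map_zero]
    · intro x v
      rw [map_zero gen, clift_zero x]
      simp [extDerivOne]
  · rintro ξ η ⟨h1a, h1b⟩ ⟨h2a, h2b⟩
    have hXd := (hgen ξ).differentiable (by simp)
    have hYd := (hgen η).differentiable (by simp)
    constructor
    · intro x
      rw [map_add, clift_add hXd hYd x, map_add, h1a x, h2a x, add_zero]
    · intro x v
      rw [map_add, clift_add hXd hYd x, extDerivOne_add, h1b x v, h2b x v, add_zero]
  · rintro c ξ ⟨h1a, h1b⟩
    have hXd := (hgen ξ).differentiable (by simp)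
    constructor
    · intro x
      rw [map_smul, clift_smul c hXd x, map_smul, h1a x, smul_zero]
    · intro x v
      rw [map_smul, clift_smul c hXd x, extDerivOne_smul, h1b x v, mul_zero]
  · rintro ξ η ⟨h1a, h1b⟩ ⟨h2a, h2b⟩
    have hX := hgen ξ
    have hY := hgen η
    have hA := differentiable_clift hX
    have hB := differentiable_clift hY
    have hcl : ∀ x, clift (gen ⁅ξ, η⁆) x
        = -(vbracket (clift (gen ξ)) (clift (gen η)) x) := by
      intro x
      rw [hanti ξ η, clift_neg, clift_vbracket hX hY x]
    constructor
    · intro x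
      rw [hcl x, map_neg, beta_bracket hβ hA hB h1a h2a h1b x, neg_zero]
    · intro x v
      rw [hcl x, extDerivOne_neg, ext_bracket hβ hA hB h1b h2b x v, neg_zero]
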